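/- Let n be a nonempty finite index type, M a symmetric square real matrix of size n, S a square real matrix of size n, and q̄ : n → ℝ with S *ᵥ q̄ = 0. If q : ℝ → (n → ℝ) is differentiable and satisfies M *ᵥ (q'(t)) + S *ᵥ (q(t)) = 0 for all t, then the Lyapunov function l(t) := (1/2) · (q(t) - q̄) ⬝ᵥ (M *ᵥ (q(t) - q̄)) is differentiable and satisfies the energy identity l'(t) = -(q(t) - q̄) ⬝ᵥ (S *ᵥ (q(t) - q̄)) for all t. -/

import Mathlib

open Matrix

section Calculus

variable {𝕜 : Type*} [NontriviallyNormedField 𝕜] {m n : Type*} [Fintype n]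
  {f g : 𝕜 → n → 𝕜} {f' g' : n → 𝕜} {x : 𝕜}

theorem HasDerivAt.dotProduct (hf : HasDerivAt f f' x) (hg : HasDerivAt g g' x) :
    HasDerivAt (fun s => f s ⬝ᵥ g s) (f' ⬝ᵥ g x + f x ⬝ᵥ g') x := by
  have h := HasDerivAt.fun_sum fun i (_ : i ∈ Finset.univ) =>
    (hasDerivAt_pi.mp hf i).mul (hasDerivAt_pi.mp hg i)
  rwa [Finset.sum_add_distrib] at h

theorem HasDerivAt.mulVec (A : Matrix m n 𝕜) (hf : HasDerivAt f f' x) :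
    HasDerivAt (fun s => A *ᵥ f s) (A *ᵥ f') x :=
  hasDerivAt_pi.mpr fun i => by
    have h := (hasDerivAt_const x (A i)).dotProduct hf
    rwa [zero_dotProduct, zero_add] at h

theorem Matrix.IsSymm.dotProduct_mulVec_comm {A : Matrix n n 𝕜} (hA : A.IsSymm) (v w : n → 𝕜) :
    v ⬝ᵥ (A *ᵥ w) = w ⬝ᵥ (A *ᵥ v) := by
  simpa only [hA.eq] using dotProduct_transpose_mulVec A v w

theorem Matrix.IsSymm.hasDerivAt_dotProduct_mulVec {A : Matrix n n 𝕜} (hA : A.IsSymm)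
    (hf : HasDerivAt f f' x) :
    HasDerivAt (fun s => f s ⬝ᵥ (A *ᵥ f s)) (2 * (f x ⬝ᵥ (A *ᵥ f'))) x := by
  convert hf.dotProduct (hf.mulVec A) using 1
  rw [hA.dotProduct_mulVec_comm f', two_mul]

end Calculus

theorem lyapunov_energy_identity_general
    {n : Type*} [Fintype n]
    (M : Matrix n n ℝ) (hM : M.IsSymm) (S : Matrix n n ℝ)
    (qbar : n → ℝ) (hqbar : S *ᵥ qbar = 0)
    (q q' : ℝ → (n → ℝ))
    (hq : ∀ t, HasDerivAt q (q' t) t)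
    (hdyn : ∀ t, M *ᵥ q' t + S *ᵥ q t = 0) :
    ∀ t : ℝ,
      HasDerivAt (fun s => (1 / 2 : ℝ) * ((q s - qbar) ⬝ᵥ (M *ᵥ (q s - qbar))))
        (-((q t - qbar) ⬝ᵥ (S *ᵥ (q t - qbar)))) t := by
  intro t
  have hMq' : M *ᵥ q' t = -(S *ᵥ (q t - qbar)) := by
    rw [mulVec_sub, hqbar, sub_zero, eq_neg_iff_add_eq_zero]
    exact hdyn t
  have hl := (hM.hasDerivAt_dotProduct_mulVec ((hq t).sub_const qbar)).const_mul (1 / 2 : ℝ)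
  refine hl.congr_deriv ?_
  rw [hMq', dotProduct_neg]
  ring

/-- Energy identity for the quadratic Lyapunov function along the semi-discrete
dynamics `M q̇ + S q = 0` with equilibrium `q̄` (`S *ᵥ q̄ = 0`), for symmetric `M`:
`l(t) = (1/2)(q(t) - q̄) ⬝ᵥ (M *ᵥ (q(t) - q̄))` has derivative
`l'(t) = -(q(t) - q̄) ⬝ᵥ (S *ᵥ (q(t) - q̄))`. -/
theorem lyapunov_energy_identity
    {n : Type*} [Fintype n] [DecidableEq n] [Nonempty n]
    (M : Matrix n n ℝ) (hM : M.IsSymm) (S : Matrix n n ℝ)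
    (qbar : n → ℝ) (hqbar : S *ᵥ qbar = 0)
    (q q' : ℝ → (n → ℝ))
    (hq : ∀ t, HasDerivAt q (q' t) t)
    (hdyn : ∀ t, M *ᵥ q' t + S *ᵥ q t = 0) :
    ∀ t : ℝ,
      HasDerivAt (fun s => (1 / 2 : ℝ) * ((q s - qbar) ⬝ᵥ (M *ᵥ (q s - qbar))))
        (-((q t - qbar) ⬝ᵥ (S *ᵥ (q t - qbar)))) t :=
  lyapunov_energy_identity_general M hM S qbar hqbar q q' hq hdyn
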